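/- arXiv:2507.12607 — 3 statements merged into one kernel-verified Lean document; each statement's English description precedes it below -/
import Mathlib

section
/- Let (V,w) be a weighted graph, let S ⊆ V with |S| = k, and let H ⊆ V with |H| > k be such that S∖H ≠ ∅ and every vertex in H∖S has weighted degree at least the weighted degree of every vertex in S∖H. Then there exist vertices i ∈ H∖S and j ∈ S∖H such that δ_w((S∖{j})∪{i}) ≥ (1 − 2/|H∖S|)·δ_w(S). (General local exchange lemma, Lemma 2.4.) -/
open Finset

/-- The cut value of a set `S`: total weight of pairs with exactly one endpoint in `S`. -/
noncomputable def cutVal {V : Type*} [Fintype V] [DecidableEq V]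
    (w : V → V → ℝ) (S : Finset V) : ℝ :=
  ∑ u ∈ S, ∑ v ∈ Sᶜ, w u v

/-- The weighted degree of a vertex `v`. -/
noncomputable def wdeg {V : Type*} [Fintype V] [DecidableEq V]
    (w : V → V → ℝ) (v : V) : ℝ :=
  ∑ u ∈ Finset.univ.erase v, w u v

lemma key_swap {V : Type*} [Fintype V] [DecidableEq V]
    (w : V → V → ℝ) (hsymm : ∀ u v, w u v = w v u) (hnonneg : ∀ u v, 0 ≤ w u v)
    (S : Finset V) (i j : V) (hi : i ∉ S) (hj : j ∈ S)
    (hw : wdeg w j ≤ wdeg w i) :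
    cutVal w S - 2 * ∑ u ∈ S, w u i ≤ cutVal w (insert i (S.erase j)) := by
  have hij : i ≠ j := fun h => hi (h ▸ hj)
  have hic : i ∈ Sᶜ := mem_compl.mpr hi
  have hjc : j ∉ Sᶜ := by simp [hj]
  have hiSj : i ∉ S.erase j := fun h => hi (mem_of_mem_erase h)
  have hjSci : j ∉ Sᶜ.erase i := fun h => hjc (mem_of_mem_erase h)
  have hcompl : (insert i (S.erase j))ᶜ = insert j (Sᶜ.erase i) := by
    rw [compl_insert, compl_erase, erase_insert_of_ne hij.symm]
  -- abbreviations
  set A := ∑ u ∈ S.erase j, w u j with hA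
  set B := ∑ u ∈ S.erase j, w u i with hB
  set C := ∑ v ∈ Sᶜ.erase i, w i v with hC
  set D := ∑ v ∈ Sᶜ, w j v with hD
  set E := ∑ u ∈ S.erase j, ∑ v ∈ Sᶜ.erase i, w u v with hE
  set c := ∑ u ∈ S, w u i with hc
  have hBc : B = c - w j i := by
    rw [hB, hc, ← Finset.sum_erase_add S _ hj]; ring
  have hS : cutVal w S = D + B + E := by
    rw [cutVal, ← Finset.sum_erase_add S _ hj]
    have : ∀ u ∈ S.erase j, ∑ v ∈ Sᶜ, w u v = w u i + ∑ v ∈ Sᶜ.erase i, w u v := by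
      intro u _
      rw [← Finset.sum_erase_add Sᶜ _ hic]; ring
    rw [Finset.sum_congr rfl this, Finset.sum_add_distrib]
    ring
  have hS' : cutVal w (insert i (S.erase j)) = w i j + C + A + E := by
    rw [cutVal, hcompl, Finset.sum_insert hiSj]
    have h1 : ∑ v ∈ insert j (Sᶜ.erase i), w i v = w i j + C := by
      rw [Finset.sum_insert hjSci]
    have h2 : ∀ u ∈ S.erase j, ∑ v ∈ insert j (Sᶜ.erase i), w u v
        = w u j + ∑ v ∈ Sᶜ.erase i, w u v := by
      intro u _; rw [Finset.sum_insert hjSci]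
    rw [h1, Finset.sum_congr rfl h2, Finset.sum_add_distrib]
    ring
  have hdegi : wdeg w i = c + C := by
    have hCsym : C = ∑ u ∈ Sᶜ.erase i, w u i :=
      Finset.sum_congr rfl fun u _ => hsymm i u
    rw [wdeg, Finset.sum_erase_eq_sub (mem_univ i),
      ← Finset.sum_add_sum_compl S (fun u => w u i),
      ← Finset.sum_erase_add Sᶜ _ hic, hCsym, hc]
    ring
  have hdegj : wdeg w j = A + D := by
    have hDsym : D = ∑ u ∈ Sᶜ, w u j :=
      Finset.sum_congr rfl fun u _ => hsymm j u
    rw [wdeg, Finset.sum_erase_eq_sub (mem_univ j),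
      ← Finset.sum_add_sum_compl S (fun u => w u j),
      ← Finset.sum_erase_add S _ hj, hDsym, hA]
    ring
  have hA0 : 0 ≤ A := Finset.sum_nonneg fun u _ => hnonneg u j
  have := hnonneg i j
  have := hnonneg j i
  linarith

/-- General local exchange lemma (Lemma 2.4): if `|H| > |S| = k`, `S \ H ≠ ∅`, and every
vertex of `H \ S` has weighted degree at least that of every vertex of `S \ H`, then some
vertex of `S \ H` can be swapped for a vertex of `H \ S` losing at most a `2/|H \ S|`
fraction of the cut value. -/
theorem local_exchange_general {V : Type*} [Fintype V] [DecidableEq V]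
    (w : V → V → ℝ) (hsymm : ∀ u v, w u v = w v u) (hnonneg : ∀ u v, 0 ≤ w u v)
    (k : ℕ) (S H : Finset V) (hScard : S.card = k) (hHcard : k < H.card)
    (hSH : (S \ H).Nonempty)
    (hdeg : ∀ u ∈ H \ S, ∀ v ∈ S \ H, wdeg w v ≤ wdeg w u) :
    ∃ i ∈ H \ S, ∃ j ∈ S \ H,
      (1 - 2 / (((H \ S).card : ℝ))) * cutVal w S ≤ cutVal w (insert i (S.erase j)) := by
  have hHS : (H \ S).Nonempty := by
    rw [Finset.sdiff_nonempty]
    intro hsub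
    have := Finset.card_le_card hsub
    omega
  obtain ⟨i, hiHS, hmin⟩ := Finset.exists_min_image (H \ S) (fun i => ∑ u ∈ S, w u i) hHS
  obtain ⟨j, hjSH⟩ := hSH
  refine ⟨i, hiHS, j, hjSH, ?_⟩
  have hiS : i ∉ S := (Finset.mem_sdiff.mp hiHS).2
  have hjS : j ∈ S := (Finset.mem_sdiff.mp hjSH).1
  have hkey := key_swap w hsymm hnonneg S i j hiS hjS (hdeg i hiHS j hjSH)
  set m : ℝ := ((H \ S).card : ℝ) with hm
  have hm0 : 0 < m := by
    have := Finset.card_pos.mpr hHS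
    rw [hm]; exact_mod_cast this
  have hsum : ∑ i' ∈ H \ S, ∑ u ∈ S, w u i' ≤ cutVal w S := by
    calc ∑ i' ∈ H \ S, ∑ u ∈ S, w u i' = ∑ u ∈ S, ∑ i' ∈ H \ S, w u i' :=
          Finset.sum_comm
      _ ≤ ∑ u ∈ S, ∑ v ∈ Sᶜ, w u v :=
          Finset.sum_le_sum fun u _ =>
            Finset.sum_le_sum_of_subset_of_nonneg
              (fun v hv => mem_compl.mpr (Finset.mem_sdiff.mp hv).2)
              (fun v _ _ => hnonneg u v)
      _ = cutVal w S := rfl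
  have hmc : m * (∑ u ∈ S, w u i) ≤ cutVal w S := by
    have h := Finset.card_nsmul_le_sum (H \ S) (fun i' => ∑ u ∈ S, w u i')
      (∑ u ∈ S, w u i) hmin
    rw [nsmul_eq_mul] at h
    rw [hm]
    linarith
  have hdm : (∑ u ∈ S, w u i) ≤ cutVal w S / m :=
    (le_div_iff₀ hm0).mpr (by linarith)
  have hid : (1 - 2 / m) * cutVal w S = cutVal w S - 2 * (cutVal w S / m) := by ring
  linarith
end

section
/- Let (V,w) be a weighted graph with V partitioned into disjoint parts V_1,…,V_c, let p ∈ [c], and let S ⊆ V with |S∩V_p| = k_p. Let H ⊆ V_p be a set of h vertices with k_p < h ≤ |V_p| such that every vertex of H has weighted degree at least the weighted degree of every vertex of V_p∖H, and suppose (S∩V_p)∖H ≠ ∅. Then there exist vertices i ∈ H∖(S∩V_p) and j ∈ (S∩V_p)∖H such that δ_w((S∖{j})∪{i}) ≥ (1 − 2/(h−k_p))·δ_w(S). (Corollary 2.5.) -/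
/-! Pick `j ∈ (S ∩ V_p) \ H` and, among the at least `h - k_p` vertices of `H \ (S ∩ V_p)`,
a vertex `i` with the least weight `w(i, S)` into `S`. These vertices lie outside `S`, so their
weights into `S` sum to at most `δ(S)`, whence `w(i, S) ≤ δ(S) / (h - k_p)`.
Swapping `j` for `i` changes the cut by
`δ(i) - δ(j) - 2 w(i, S - j) + 2 w(j, S - j) ≥ -2 w(i, S)`, since `δ(j) ≤ δ(i)`. -/

open Finset

section Cut

variable {V : Type*} [Fintype V] [DecidableEq V] {w : V → V → ℝ}

lemma cutVal_eq_sum_compl (hsymm : ∀ u v, w u v = w v u) (S : Finset V) :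
    cutVal w S = ∑ u ∈ Sᶜ, ∑ v ∈ S, w u v := by
  rw [cutVal, sum_comm]
  exact sum_congr rfl fun u _ => sum_congr rfl fun v _ => hsymm v u

lemma cutVal_insert (hsymm : ∀ u v, w u v = w v u) {T : Finset V} {x : V} (hx : x ∉ T) :
    cutVal w (insert x T) = cutVal w T + wdeg w x - 2 * ∑ v ∈ T, w x v := by
  have hcompl : (insert x T)ᶜ = Tᶜ.erase x := by
    ext v; simp
  have hrow : ∀ u ∈ T, ∑ v ∈ Tᶜ.erase x, w u v = ∑ v ∈ Tᶜ, w u v - w u x :=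
    fun _ _ => sum_erase_eq_sub (by simpa using hx)
  have hx_row : ∑ v ∈ Tᶜ.erase x, w x v = wdeg w x - ∑ v ∈ T, w x v := by
    have hsplit : Tᶜ.erase x = univ.erase x \ T := by
      ext v; simp [and_comm]
    have hsub : T ⊆ univ.erase x := fun v hv =>
      mem_erase.mpr ⟨by rintro rfl; exact hx hv, mem_univ v⟩
    rw [hsplit, sum_sdiff_eq_sub hsub, wdeg]
    simp_rw [hsymm x]
  have hx_col : ∑ u ∈ T, w u x = ∑ v ∈ T, w x v := sum_congr rfl fun u _ => hsymm u x
  rw [cutVal, hcompl, sum_insert hx, sum_congr rfl hrow, sum_sub_distrib, hx_row, hx_col, cutVal]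
  ring

lemma sub_two_mul_sum_le_cutVal_swap (hsymm : ∀ u v, w u v = w v u)
    (hnonneg : ∀ u v, 0 ≤ w u v)
    {S : Finset V} {i j : V} (hi : i ∉ S) (hj : j ∈ S) (hdeg : wdeg w j ≤ wdeg w i) :
    cutVal w S - 2 * ∑ v ∈ S, w i v ≤ cutVal w (insert i (S.erase j)) := by
  have hiT : i ∉ S.erase j := fun h => hi (mem_of_mem_erase h)
  have hS : cutVal w S = cutVal w (S.erase j) + wdeg w j - 2 * ∑ v ∈ S.erase j, w j v := by
    conv_lhs => rw [← insert_erase hj]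
    exact cutVal_insert hsymm (notMem_erase j S)
  have hj_nonneg : 0 ≤ ∑ v ∈ S.erase j, w j v := sum_nonneg fun v _ => hnonneg j v
  have hi_mono : ∑ v ∈ S.erase j, w i v ≤ ∑ v ∈ S, w i v :=
    sum_le_sum_of_subset_of_nonneg (erase_subset j S) fun v _ _ => hnonneg i v
  rw [cutVal_insert hsymm hiT]
  linarith

lemma sum_sum_le_cutVal (hsymm : ∀ u v, w u v = w v u) (hnonneg : ∀ u v, 0 ≤ w u v)
    {A S : Finset V} (hAS : Disjoint A S) :
    ∑ u ∈ A, ∑ v ∈ S, w u v ≤ cutVal w S := by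
  rw [cutVal_eq_sum_compl hsymm]
  exact sum_le_sum_of_subset_of_nonneg (fun u hu => mem_compl.mpr (disjoint_left.mp hAS hu))
    fun u _ _ => sum_nonneg fun v _ => hnonneg u v

lemma exists_card_mul_sum_le_cutVal (hsymm : ∀ u v, w u v = w v u)
    (hnonneg : ∀ u v, 0 ≤ w u v) {A S : Finset V} (hA : A.Nonempty) (hAS : Disjoint A S) :
    ∃ i ∈ A, (A.card : ℝ) * ∑ v ∈ S, w i v ≤ cutVal w S := by
  obtain ⟨i, hiA, hmin⟩ := exists_min_image A (fun u => ∑ v ∈ S, w u v) hA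
  refine ⟨i, hiA, ?_⟩
  calc (A.card : ℝ) * ∑ v ∈ S, w i v = A.card • ∑ v ∈ S, w i v :=
        (nsmul_eq_mul _ _).symm
    _ ≤ ∑ u ∈ A, ∑ v ∈ S, w u v := card_nsmul_le_sum A _ _ hmin
    _ ≤ cutVal w S := sum_sum_le_cutVal hsymm hnonneg hAS

end Cut

theorem local_exchange_block_general {V : Type*} [Fintype V] [DecidableEq V]
    (w : V → V → ℝ) (hsymm : ∀ u v, w u v = w v u) (hnonneg : ∀ u v, 0 ≤ w u v)
    (c : ℕ) (Vb : Fin c → Finset V)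
    (p : Fin c) (kp h : ℕ)
    (S : Finset V) (hScard : (S ∩ Vb p).card = kp)
    (H : Finset V) (hHsub : H ⊆ Vb p) (hHcard : H.card = h)
    (hkh : kp < h)
    (hdeg : ∀ u ∈ H, ∀ v ∈ Vb p \ H, wdeg w v ≤ wdeg w u)
    (hne : ((S ∩ Vb p) \ H).Nonempty) :
    ∃ i ∈ H \ (S ∩ Vb p), ∃ j ∈ (S ∩ Vb p) \ H,
      (1 - 2 / ((h : ℝ) - (kp : ℝ))) * cutVal w S ≤ cutVal w (insert i (S.erase j)) := by
  obtain ⟨j, hj⟩ := hne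
  set A := H \ (S ∩ Vb p)
  have hAS : Disjoint A S := disjoint_left.mpr fun v hv hvS =>
    (mem_sdiff.mp hv).2 (mem_inter.mpr ⟨hvS, hHsub (mem_sdiff.mp hv).1⟩)
  have hAcard : h - kp ≤ A.card := hHcard ▸ hScard ▸ le_card_sdiff (S ∩ Vb p) H
  have hgap : (0 : ℝ) < (h : ℝ) - kp := sub_pos.mpr (by exact_mod_cast hkh)
  obtain ⟨i, hiA, hi⟩ := exists_card_mul_sum_le_cutVal hsymm hnonneg
    (card_pos.mp (by omega)) hAS
  have hi_bound : ∑ v ∈ S, w i v ≤ cutVal w S / ((h : ℝ) - kp) := by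
    have hle : ((h : ℝ) - kp) ≤ A.card := by
      rw [← Nat.cast_sub hkh.le]; exact_mod_cast hAcard
    rw [le_div_iff₀ hgap]
    nlinarith [sum_nonneg fun v (_ : v ∈ S) => hnonneg i v]
  obtain ⟨hjS, hjV⟩ := mem_inter.mp (mem_sdiff.mp hj).1
  have hswap := sub_two_mul_sum_le_cutVal_swap hsymm hnonneg (disjoint_left.mp hAS hiA) hjS
    (hdeg i (mem_sdiff.mp hiA).1 j (mem_sdiff.mpr ⟨hjV, (mem_sdiff.mp hj).2⟩))
  refine ⟨i, hiA, j, hj, ?_⟩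
  calc (1 - 2 / ((h : ℝ) - kp)) * cutVal w S
        = cutVal w S - 2 * (cutVal w S / ((h : ℝ) - kp)) := by ring
    _ ≤ cutVal w S - 2 * ∑ v ∈ S, w i v := by linarith
    _ ≤ cutVal w (insert i (S.erase j)) := hswap

/-- Corollary 2.5: blockwise local exchange. With `V` partitioned into `V_1, …, V_c`,
`p ∈ [c]`, `|S ∩ V_p| = k_p`, and `H ⊆ V_p` a set of `h > k_p` highest-weighted-degree
vertices of `V_p` such that `(S ∩ V_p) \ H ≠ ∅`, some vertex of `(S ∩ V_p) \ H` can be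
swapped for a vertex of `H \ (S ∩ V_p)` losing at most a `2/(h - k_p)` fraction of the
cut value. -/
theorem local_exchange_block {V : Type*} [Fintype V] [DecidableEq V]
    (w : V → V → ℝ) (hsymm : ∀ u v, w u v = w v u) (hnonneg : ∀ u v, 0 ≤ w u v)
    (c : ℕ) (Vb : Fin c → Finset V)
    (hVdisj : ∀ i j, i ≠ j → Disjoint (Vb i) (Vb j))
    (hVcover : ∀ v : V, ∃ i, v ∈ Vb i)
    (p : Fin c) (kp h : ℕ)
    (S : Finset V) (hScard : (S ∩ Vb p).card = kp)
    (H : Finset V) (hHsub : H ⊆ Vb p) (hHcard : H.card = h)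
    (hkh : kp < h) (hhV : h ≤ (Vb p).card)
    (hdeg : ∀ u ∈ H, ∀ v ∈ Vb p \ H, wdeg w v ≤ wdeg w u)
    (hne : ((S ∩ Vb p) \ H).Nonempty) :
    ∃ i ∈ H \ (S ∩ Vb p), ∃ j ∈ (S ∩ Vb p) \ H,
      (1 - 2 / ((h : ℝ) - (kp : ℝ))) * cutVal w S ≤ cutVal w (insert i (S.erase j)) :=
  local_exchange_block_general w hsymm hnonneg c Vb p kp h S hScard H hHsub hHcard hkh hdeg hne
end

section
/- Let M be a matroid on a finite ground set V, and let (V,w) be a weighted graph. Let x ∈ ℝ^V lie in the convex hull of the indicator vectors {χ_B : B a base of M}. Then there exists a base B of M such that δ_w(B) ≥ Σ_{{u,v}} w(u,v)·(x_u + x_v − 2 x_u x_v), the sum over unordered pairs of distinct vertices. (No integrality gap of the quadratic program over the matroid base polytope, via pipage rounding; used in the proof of Theorem 1.3.) -/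
open Finset

/-- The quadratic cut objective `Σ_{{u,v}} w(u,v)·(x_u + x_v − 2 x_u x_v)`, summed over
unordered pairs of distinct vertices. -/
noncomputable def quadCut {V : Type*} [Fintype V] [DecidableEq V]
    (w : V → V → ℝ) (x : V → ℝ) : ℝ :=
  (∑ u, ∑ v ∈ Finset.univ.erase u, w u v * (x u + x v - 2 * x u * x v)) / 2

/-!
Pipage rounding. Along an exchange direction `d = χ_v - χ_u` the objective
`t ↦ quadCut w (x + t • d)` is a quadratic with leading coefficient `2 w(u,v) ≥ 0`, so at `t = 0`
it is at most its value at either end of any interval around `0`. Given two bases `B₁ ≠ B₂` with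
weights `a, b` in a convex combination, a symmetric exchange pair `u ∈ B₁ \ B₂`, `v ∈ B₂ \ B₁`
lets us move all of the weight `a` from `B₁` to `B₁ - u + v` (that is `t = a`) or all of `b` from
`B₂` to `B₂ - v + u` (`t = -b`) without decreasing the objective, and either move shrinks
`B₁ ∆ B₂`. Repeating until the two bases coincide merges them, and merging the bases of the
combination one at a time ends at a single base `B`, where the objective is `δ_w(B)`.
-/

open Set in
theorem Matroid.IsBase.exists_symm_exchange {α : Type*} {M : Matroid α} {B₁ B₂ : Set α} {u : α}
    (hB₁ : M.IsBase B₁) (hB₂ : M.IsBase B₂) (hu : u ∈ B₁ \ B₂) :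
    ∃ v ∈ B₂ \ B₁, M.IsBase (insert v (B₁ \ {u})) ∧ M.IsBase (insert u (B₂ \ {v})) := by
  have huE : u ∈ M.E := hB₁.subset_ground hu.1
  have hK := hB₁.compl_closure_sdiff_singleton_isCocircuit hu.1
  have hC := hB₂.fundCircuit_isCircuit huE hu.2
  have huK : u ∈ M.E \ M.closure (B₁ \ {u}) :=
    ⟨huE, hB₁.indep.notMem_closure_sdiff_of_mem hu.1⟩
  -- a circuit and a cocircuit never meet in exactly one element
  obtain ⟨v, ⟨hvC, hvE, hvcl⟩, hvu⟩ :=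
    (hC.isCocircuit_inter_nontrivial hK ⟨u, M.mem_fundCircuit u B₂, huK⟩).exists_ne u
  have hvB₂ : v ∈ B₂ :=
    (mem_insert_iff.1 (M.fundCircuit_subset_insert u B₂ hvC)).resolve_left hvu
  have hvB₁ : v ∉ B₁ := fun hv ↦
    hvcl (M.subset_closure _ (sdiff_subset.trans hB₁.subset_ground) ⟨hv, hvu⟩)
  refine ⟨v, ⟨hvB₂, hvB₁⟩, hB₁.exchange_base_of_notMem_closure hu.1 hvcl hvE, ?_⟩
  have hind := (hB₂.indep.mem_fundCircuit_iff (by rwa [hB₂.closure_eq]) hu.2).1 hvC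
  rw [← insert_sdiff_singleton_comm hvu.symm] at hind
  exact hB₂.exchange_isBase_of_indep hu.2 hind

section

variable {V : Type*} [DecidableEq V]

def indicatorVec (B : Finset V) : V → ℝ := fun v => if v ∈ B then 1 else 0

lemma indicatorVec_insert_erase {B : Finset V} {u v : V} (hu : u ∈ B) (hv : v ∉ B) :
    indicatorVec (insert v (B.erase u)) = indicatorVec B + (Pi.single v 1 - Pi.single u 1) := by
  have huv : u ≠ v := ne_of_mem_of_not_mem hu hv
  ext s
  by_cases hsv : s = v
  · subst hsv; simp [indicatorVec, hv, huv]
  by_cases hsu : s = u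
  · subst hsu; simp [indicatorVec, hu, huv]
  simp [indicatorVec, hsu, hsv]

lemma card_symmDiff_insert_erase_lt {B₁ B₂ : Finset V} {u v : V} (hu₁ : u ∈ B₁) (hu₂ : u ∉ B₂)
    (hv₁ : v ∉ B₁) (hv₂ : v ∈ B₂) :
    #(symmDiff (insert v (B₁.erase u)) B₂) < #(symmDiff B₁ B₂) := by
  have heq : symmDiff (insert v (B₁.erase u)) B₂ = ((symmDiff B₁ B₂).erase u).erase v := by
    ext s
    by_cases hsu : s = u
    · subst hsu; simp [mem_symmDiff, hu₂, ne_of_mem_of_not_mem hv₂ hu₂ |>.symm]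
    by_cases hsv : s = v
    · subst hsv; simp [mem_symmDiff, hv₂]
    simp [mem_symmDiff, hsu, hsv]
  rw [heq]
  exact card_lt_card <| (erase_subset _ _).trans_ssubset <|
    erase_ssubset (mem_symmDiff.2 (Or.inl ⟨hu₁, hu₂⟩))

variable [Fintype V] {w : V → V → ℝ}

lemma cutVal_eq_sum_ite (B : Finset V) :
    cutVal w B = ∑ u, ∑ v, if u ∈ B ∧ v ∉ B then w u v else 0 := by
  simp only [cutVal, ite_and, ← mem_compl, sum_ite_irrel, sum_const_zero, Fintype.sum_ite_mem]

lemma quadCut_indicatorVec (hsymm : ∀ u v, w u v = w v u) (B : Finset V) :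
    quadCut w (indicatorVec B) = cutVal w B := by
  have hsummand : ∀ u v, w u v * (indicatorVec B u + indicatorVec B v
      - 2 * indicatorVec B u * indicatorVec B v) =
      (if u ∈ B ∧ v ∉ B then w u v else 0) + (if v ∈ B ∧ u ∉ B then w v u else 0) := by
    intro u v
    by_cases hu : u ∈ B <;> by_cases hv : v ∈ B <;> norm_num [indicatorVec, hu, hv, hsymm u v]
  simp only [quadCut, hsummand]
  rw [sum_congr rfl fun u _ => sum_erase _ (by simp)]
  simp only [sum_add_distrib]
  rw [sum_comm (f := fun u v => if v ∈ B ∧ u ∉ B then w v u else 0), cutVal_eq_sum_ite]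
  ring

lemma quadCut_add_smul (x d : V → ℝ) : ∃ D, ∀ t : ℝ, quadCut w (x + t • d) =
    quadCut w x + D * t - (∑ u, ∑ v ∈ univ.erase u, w u v * d u * d v) * t ^ 2 := by
  refine ⟨(∑ u, ∑ v ∈ univ.erase u,
      w u v * (d u + d v - 2 * (x u * d v + x v * d u))) / 2, fun t => ?_⟩
  simp only [quadCut, Pi.add_apply, Pi.smul_apply, smul_eq_mul, sum_div, mul_comm _ t,
    mul_comm _ (t ^ 2), mul_sum, ← sum_sub_distrib, ← sum_add_distrib]
  refine sum_congr rfl fun u _ => sum_congr rfl fun v _ => ?_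
  ring

lemma sum_single_sub_single_mul (u v : V) (g : V → ℝ) :
    ∑ s, (Pi.single v 1 - Pi.single u 1 : V → ℝ) s * g s = g v - g u := by
  simp [sub_mul, sum_sub_distrib, Pi.single_apply, ite_mul]

lemma sum_mul_single_sub_single (hsymm : ∀ u v, w u v = w v u) {u v : V} (huv : u ≠ v) :
    ∑ s, ∑ s' ∈ univ.erase s, w s s' * (Pi.single v 1 - Pi.single u 1 : V → ℝ) s *
      (Pi.single v 1 - Pi.single u 1 : V → ℝ) s' = -2 * w u v := by
  have hcomm : ∀ (d : V → ℝ) s s', w s s' * d s * d s' = d s * (d s' * w s s') :=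
    fun _ _ _ => by ring
  simp only [hcomm, ← mul_sum]
  rw [sum_single_sub_single_mul]
  simp only [sum_erase_eq_sub (mem_univ _), sum_single_sub_single_mul]
  simp [huv, huv.symm, hsymm v u]
  ring

lemma quadCut_le_max_exchange (hsymm : ∀ u v, w u v = w v u) (hnonneg : ∀ u v, 0 ≤ w u v)
    (x : V → ℝ) {u v : V} (huv : u ≠ v) {a b : ℝ} (ha : 0 ≤ a) (hb : 0 ≤ b) :
    quadCut w x ≤ max (quadCut w (x + a • (Pi.single v 1 - Pi.single u 1)))
      (quadCut w (x - b • (Pi.single v 1 - Pi.single u 1))) := by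
  obtain ⟨D, hD⟩ := quadCut_add_smul (w := w) x (Pi.single v 1 - Pi.single u 1)
  rw [sub_eq_add_neg x, ← neg_smul, hD, hD, sum_mul_single_sub_single hsymm huv]
  have hq := hnonneg u v
  rcases le_total 0 D with hD0 | hD0
  · exact le_max_of_le_left (by nlinarith)
  · exact le_max_of_le_right (by nlinarith)

theorem exists_isBase_quadCut_merge_le (M : Matroid V) (hsymm : ∀ u v, w u v = w v u)
    (hnonneg : ∀ u v, 0 ≤ w u v) (y : V → ℝ) {a b : ℝ} (ha : 0 ≤ a) (hb : 0 ≤ b)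
    {B₁ B₂ : Finset V} (hB₁ : M.IsBase (B₁ : Set V)) (hB₂ : M.IsBase (B₂ : Set V)) :
    ∃ B : Finset V, M.IsBase (B : Set V) ∧
      quadCut w (y + a • indicatorVec B₁ + b • indicatorVec B₂) ≤
        quadCut w (y + (a + b) • indicatorVec B) := by
  induction h : #(symmDiff B₁ B₂) using Nat.strong_induction_on generalizing B₁ B₂ with
  | _ n ih =>
  rcases eq_or_ne B₁ B₂ with rfl | hne
  · exact ⟨B₁, hB₁, by rw [add_smul, add_assoc]⟩
  obtain ⟨u, hu₁, hu₂⟩ : ∃ u ∈ B₁, u ∉ B₂ := by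
    by_contra! hsub
    exact hne (coe_injective (hB₁.eq_of_subset_isBase hB₂ (by exact_mod_cast hsub)))
  obtain ⟨v, ⟨hv₂, hv₁⟩, hB₁', hB₂'⟩ := hB₁.exists_symm_exchange hB₂ (u := u) ⟨hu₁, hu₂⟩
  have huv : u ≠ v := ne_of_mem_of_not_mem hu₁ hv₁
  rw [← coe_erase, ← coe_insert] at hB₁' hB₂'
  rcases le_max_iff.1 (quadCut_le_max_exchange hsymm hnonneg
    (y + a • indicatorVec B₁ + b • indicatorVec B₂) huv ha hb) with hle | hle
  · obtain ⟨B, hB, hB_le⟩ := ih _ (h ▸ card_symmDiff_insert_erase_lt hu₁ hu₂ hv₁ hv₂) hB₁' hB₂ rfl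
    refine ⟨B, hB, hle.trans (le_of_eq_of_le ?_ hB_le)⟩
    rw [indicatorVec_insert_erase hu₁ hv₁]
    congr 1
    module
  · have hlt := card_symmDiff_insert_erase_lt hv₂ hv₁ hu₂ hu₁
    rw [symmDiff_comm _ B₁, symmDiff_comm B₂, h] at hlt
    obtain ⟨B, hB, hB_le⟩ := ih _ hlt hB₁ hB₂' rfl
    refine ⟨B, hB, hle.trans (le_of_eq_of_le ?_ hB_le)⟩
    rw [indicatorVec_insert_erase hv₂ hu₂]
    congr 1
    module

theorem exists_isBase_quadCut_sum_le (M : Matroid V) (hsymm : ∀ u v, w u v = w v u)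
    (hnonneg : ∀ u v, 0 ≤ w u v) {ι : Type*} (s : Finset ι) {c : ι → ℝ} (hc : ∀ i ∈ s, 0 ≤ c i)
    {B : ι → Finset V} (hB : ∀ i ∈ s, M.IsBase (B i : Set V)) (y : V → ℝ) :
    ∃ B' : Finset V, M.IsBase (B' : Set V) ∧
      quadCut w (y + ∑ i ∈ s, c i • indicatorVec (B i)) ≤
        quadCut w (y + (∑ i ∈ s, c i) • indicatorVec B') := by
  classical
  induction s using Finset.induction_on generalizing y with
  | empty =>
    obtain ⟨B', hB'⟩ := M.exists_isBase
    exact ⟨(Set.toFinite B').toFinset, by simpa using hB', by simp⟩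
  | insert j s hj ih =>
    obtain ⟨B', hB', hle⟩ := ih (fun i hi => hc i (mem_insert_of_mem hi))
      (fun i hi => hB i (mem_insert_of_mem hi)) (y + c j • indicatorVec (B j))
    obtain ⟨B'', hB'', hle'⟩ := exists_isBase_quadCut_merge_le M hsymm hnonneg y
      (hc j (mem_insert_self j s)) (sum_nonneg fun i hi => hc i (mem_insert_of_mem hi))
      (hB j (mem_insert_self j s)) hB'
    refine ⟨B'', hB'', ?_⟩
    rw [sum_insert hj, sum_insert hj, ← add_assoc]
    exact hle.trans hle'

end

theorem matroid_quadratic_no_gap_general {V : Type*} [Fintype V] [DecidableEq V]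
    (M : Matroid V)
    (w : V → V → ℝ) (hsymm : ∀ u v, w u v = w v u) (hnonneg : ∀ u v, 0 ≤ w u v)
    (x : V → ℝ)
    (hx : x ∈ convexHull ℝ
      {y : V → ℝ | ∃ B : Finset V, M.IsBase (B : Set V) ∧
        y = fun v => if v ∈ B then (1 : ℝ) else 0}) :
    ∃ B : Finset V, M.IsBase (B : Set V) ∧ quadCut w x ≤ cutVal w B := by
  obtain ⟨ι, _, c, z, hc₀, hc₁, hz, rfl⟩ := mem_convexHull_iff_exists_fintype.1 hx
  choose B hB hzB using hz
  obtain ⟨B', hB', hle⟩ := exists_isBase_quadCut_sum_le M hsymm hnonneg univ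
    (fun i _ => hc₀ i) (fun i _ => hB i) 0
  refine ⟨B', hB', ?_⟩
  have hz : z = fun i => indicatorVec (B i) := funext hzB
  simpa [hz, hc₁, quadCut_indicatorVec hsymm] using hle

/-- No integrality gap for the quadratic program over the matroid base polytope (via
pipage rounding, used in the proof of Theorem 1.3): for any point `x` of the convex hull
of the indicator vectors of bases of a matroid `M` on `V`, some base `B` satisfies
`δ_w(B) ≥ Σ_{{u,v}} w(u,v)·(x_u + x_v − 2 x_u x_v)`. -/
theorem matroid_quadratic_no_gap {V : Type*} [Fintype V] [DecidableEq V]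
    (M : Matroid V) (hME : M.E = Set.univ)
    (w : V → V → ℝ) (hsymm : ∀ u v, w u v = w v u) (hnonneg : ∀ u v, 0 ≤ w u v)
    (x : V → ℝ)
    (hx : x ∈ convexHull ℝ
      {y : V → ℝ | ∃ B : Finset V, M.IsBase (B : Set V) ∧
        y = fun v => if v ∈ B then (1 : ℝ) else 0}) :
    ∃ B : Finset V, M.IsBase (B : Set V) ∧ quadCut w x ≤ cutVal w B :=
  matroid_quadratic_no_gap_general M w hsymm hnonneg x hx
end
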